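/- arXiv:1512.03005 — 2 statements merged into one kernel-verified Lean document; each statement's English description precedes it below -/
import Mathlib

section
/- Let G be a finite graph with c connected components and let M be a matroid. If G is a weak framework for M and r(M) ≤ |V(G)| − c, then M is the cycle matroid M(G) of G. -/
open Set Matroid
open scoped Classical

namespace QuasiGraphicPaper

universe u v

/-- A finite multigraph: a set `V` of vertices (in an ambient type `α`), a set `E` of
edges (in an ambient type `β`), and an incidence function assigning to each edge an
unordered pair of endpoints; loop-edges and parallel edges are allowed. -/
structure Graph (α : Type u) (β : Type v) where
  V : Set α
  E : Set β
  ends : β → Sym2 α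
  finV : V.Finite
  finE : E.Finite
  ends_mem : ∀ ⦃e⦄, e ∈ E → ∀ ⦃x⦄, x ∈ ends e → x ∈ V

namespace Graph

variable {α : Type u} {β : Type v}

/-- `e` is a loop-edge of `G` at the vertex `v`. -/
def IsLoopAt (G : Graph α β) (e : β) (v : α) : Prop :=
  e ∈ G.E ∧ G.ends e = Sym2.diag v

/-- `loops_G(v)`: the set of loop-edges of `G` at `v`. -/
def loopsAt (G : Graph α β) (v : α) : Set β := {e | G.IsLoopAt e v}

/-- Two vertices are adjacent if some edge of `G` has them as its two endpoints. -/
def Adj (G : Graph α β) (u v : α) : Prop := ∃ e ∈ G.E, G.ends e = s(u, v)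

/-- A graph is connected if any two of its vertices are joined by a walk.
(The graph with no vertices is connected.) -/
def Connected (G : Graph α β) : Prop :=
  ∀ u ∈ G.V, ∀ v ∈ G.V, Relation.ReflTransGen G.Adj u v

/-- Delete a set `X` of vertices: remove the vertices in `X` and all edges meeting `X`. -/
def deleteVertices (G : Graph α β) (X : Set α) : Graph α β where
  V := G.V \ X
  E := {e ∈ G.E | ∀ x ∈ G.ends e, x ∉ X}
  ends := G.ends
  finV := G.finV.sdiff
  finE := G.finE.subset (sep_subset _ _)
  ends_mem := fun e he x hx => ⟨G.ends_mem he.1 hx, he.2 x hx⟩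

/-- `G − v`: delete the single vertex `v`. -/
abbrev deleteVertex (G : Graph α β) (v : α) : Graph α β := G.deleteVertices {v}

/-- `G − e`: delete the edge `e` (keeping all vertices). -/
def deleteEdge (G : Graph α β) (e : β) : Graph α β where
  V := G.V
  E := G.E \ {e}
  ends := G.ends
  finV := G.finV
  finE := G.finE.sdiff
  ends_mem := fun f hf x hx => G.ends_mem hf.1 hx

/-- `G[X]`: the subgraph of `G` with edge set `X` (intersected with `E(G)`) and
no isolated vertices. -/
def restrictEdges (G : Graph α β) (X : Set β) : Graph α β where
  V := {v | ∃ e ∈ X ∩ G.E, v ∈ G.ends e}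
  E := X ∩ G.E
  ends := G.ends
  finV := G.finV.subset (by rintro v ⟨e, ⟨-, he⟩, hv⟩; exact G.ends_mem he hv)
  finE := G.finE.subset inter_subset_right
  ends_mem := fun e he x hx => ⟨e, he, hx⟩

/-- The connected component of `G` containing the vertex `v`, as a graph. -/
def componentOf (G : Graph α β) (v : α) : Graph α β where
  V := {u ∈ G.V | Relation.ReflTransGen G.Adj v u}
  E := {e ∈ G.E | ∀ x ∈ G.ends e, Relation.ReflTransGen G.Adj v x}
  ends := G.ends
  finV := G.finV.subset (sep_subset _ _)
  finE := G.finE.subset (sep_subset _ _)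
  ends_mem := fun e he x hx => ⟨G.ends_mem he.1 hx, he.2 x hx⟩

/-- `H` is a connected component of `G`. -/
def IsComponentOf (H G : Graph α β) : Prop := ∃ v ∈ G.V, H = G.componentOf v

/-- The number of connected components of `G`. -/
noncomputable def ncomponents (G : Graph α β) : ℕ :=
  {H : Graph α β | H.IsComponentOf G}.ncard

/-- `G` has at most two connected components: among any three vertices, two are joined. -/
def AtMostTwoComponents (G : Graph α β) : Prop :=
  ∀ u ∈ G.V, ∀ v ∈ G.V, ∀ w ∈ G.V,
    Relation.ReflTransGen G.Adj u v ∨ Relation.ReflTransGen G.Adj u w ∨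
      Relation.ReflTransGen G.Adj v w

/-- The degree of a vertex: loop-edges count twice. -/
noncomputable def degree (G : Graph α β) (v : α) : ℕ :=
  ({e ∈ G.E | v ∈ G.ends e ∧ ¬ (G.ends e).IsDiag}).ncard +
    2 * ({e ∈ G.E | G.ends e = Sym2.diag v}).ncard

/-- `G` is a cycle: it is connected, has at least one edge, and every vertex has
degree two. -/
def IsCycleGraph (G : Graph α β) : Prop :=
  G.E.Nonempty ∧ G.Connected ∧ ∀ v ∈ G.V, G.degree v = 2

/-- `C` is (the edge set of) a cycle of `G`. -/
def CycleSet (G : Graph α β) (C : Set β) : Prop :=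
  C ⊆ G.E ∧ (G.restrictEdges C).IsCycleGraph

/-- A forest: a graph with no cycles (in particular no loop-edges). -/
def IsForest (G : Graph α β) : Prop := ∀ C, ¬ G.CycleSet C

/-- `H` is a subgraph of `G`. -/
def IsSubgraph (H G : Graph α β) : Prop := H.V ⊆ G.V ∧ H.E ⊆ G.E ∧ H.ends = G.ends

/-- `G` is `k`-connected if `G − X` is connected for every vertex set `X` with `|X| < k`. -/
def KConnected (G : Graph α β) (k : ℕ) : Prop :=
  ∀ X : Set α, X.encard < k → (G.deleteVertices X).Connected

/-- A theta: a `2`-connected graph with exactly two vertices of degree three, all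
other vertices having degree two. -/
def IsTheta (H : Graph α β) : Prop :=
  H.KConnected 2 ∧
    ∃ a ∈ H.V, ∃ b ∈ H.V, a ≠ b ∧ H.degree a = 3 ∧ H.degree b = 3 ∧
      ∀ v ∈ H.V, v ≠ a → v ≠ b → H.degree v = 2

/-- `G / e`: contract the non-loop edge `e` with endpoints `x` and `y`
(identifying `y` with `x` and deleting `e`). -/
noncomputable def contractEdge (G : Graph α β) (e : β) (x y : α) (he : e ∈ G.E)
    (hxy : G.ends e = s(x, y)) (hne : x ≠ y) : Graph α β where
  V := G.V \ {y}
  E := G.E \ {e}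
  ends := fun f => (G.ends f).map (fun w => if w = y then x else w)
  finV := G.finV.sdiff
  finE := G.finE.sdiff
  ends_mem := by
    rintro f ⟨hf, -⟩ z hz
    rw [Sym2.mem_map] at hz
    obtain ⟨w, hw, rfl⟩ := hz
    by_cases hwy : w = y
    · rw [if_pos hwy]
      have hx : x ∈ G.ends e := by rw [hxy]; exact Sym2.mem_mk_left x y
      exact ⟨G.ends_mem he hx, by simp [hne]⟩
    · rw [if_neg hwy]
      exact ⟨G.ends_mem hf hw, by simp [hwy]⟩

/-- `G ∘ e`: for a loop-edge `e` at a vertex `v` which is the unique loop-edge at `v`,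
delete `v` and `e`, and replace every other edge `f = vw` at `v` by a loop-edge at `w`. -/
noncomputable def circ (G : Graph α β) (e : β) (v : α)
    (hno : ∀ f ∈ G.E, G.ends f = Sym2.diag v → f = e) : Graph α β where
  V := G.V \ {v}
  E := G.E \ {e}
  ends := fun f =>
    if h : f ∈ G.E ∧ f ≠ e ∧ v ∈ G.ends f then Sym2.diag (Sym2.Mem.other h.2.2)
    else G.ends f
  finV := G.finV.sdiff
  finE := G.finE.sdiff
  ends_mem := by
    rintro f ⟨hf, hfe⟩ z hz
    have hfe' : f ≠ e := fun h' => hfe (by simp [h'])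
    by_cases h : f ∈ G.E ∧ f ≠ e ∧ v ∈ G.ends f
    · rw [dif_pos h] at hz
      have hze : z = Sym2.Mem.other h.2.2 := by
        have h2 : z ∈ s(Sym2.Mem.other h.2.2, Sym2.Mem.other h.2.2) := hz
        rw [Sym2.mem_iff] at h2
        tauto
      subst hze
      refine ⟨G.ends_mem hf (Sym2.other_mem h.2.2), ?_⟩
      simp only [mem_singleton_iff]
      intro hzv
      apply h.2.1
      apply hno f hf
      show G.ends f = s(v, v)
      rw [← Sym2.other_spec h.2.2, hzv]
    · rw [dif_neg h] at hz
      refine ⟨G.ends_mem hf hz, ?_⟩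
      simp only [mem_singleton_iff]
      intro hzv
      subst hzv
      exact h ⟨hf, hfe', hz⟩

end Graph

/-! ### Matroid notions -/

variable {α : Type u} {β : Type v}

/-- The rank `r_M(X)` of a set `X` in a matroid `M`: the maximum size of an
independent subset of `X`. -/
noncomputable def rank (M : Matroid β) (X : Set β) : ℕ :=
  (⨆ I ∈ {I : Set β | M.Indep I ∧ I ⊆ X}, I.encard).toNat

/-- `C` is a circuit of `M` : a minimal dependent set. -/
def IsCircuit (M : Matroid β) (C : Set β) : Prop :=
  M.Dep C ∧ ∀ D, D ⊂ C → M.Indep D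

/-- `M \ D` : delete the set `D` from the matroid `M`. -/
def deleteM (M : Matroid β) (D : Set β) : Matroid β := M ↾ (M.E \ D)

/-- `M / C` : contract the set `C` in the matroid `M`. -/
def contractM (M : Matroid β) (C : Set β) : Matroid β := (M✶ ↾ (M✶.E \ C))✶

/-- `G` is a weak framework for `M`: conditions (1)–(3). -/
def WeakFramework (G : Graph α β) (M : Matroid β) : Prop :=
  G.E = M.E ∧
  (∀ H : Graph α β, H.IsComponentOf G → rank M H.E ≤ H.V.ncard) ∧
  (∀ v ∈ G.V,
    M.closure (G.deleteVertex v).E ⊆ (G.deleteVertex v).E ∪ G.loopsAt v)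

/-- `G` is a framework for `M`: conditions (1)–(4). -/
def Framework (G : Graph α β) (M : Matroid β) : Prop :=
  WeakFramework G M ∧
    ∀ C, IsCircuit M C → (G.restrictEdges C).AtMostTwoComponents

/-- `M` is the cycle matroid `M(G)` of `G` : the ground set of `M` is `E(G)`, and the
circuits of `M` are exactly the edge sets of cycles of `G`. -/
def IsCycleMatroidOf (G : Graph α β) (M : Matroid β) : Prop :=
  M.E = G.E ∧ ∀ C, IsCircuit M C ↔ G.CycleSet C

/-- A matroid is graphic if it is the cycle matroid of some graph. -/
def Graphic (M : Matroid β) : Prop :=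
  ∃ (γ : Type v) (G : Graph γ β), IsCycleMatroidOf G M

/-- A matroid is quasi-graphic if it has a framework. -/
def QuasiGraphic (M : Matroid β) : Prop :=
  ∃ (γ : Type v) (G : Graph γ β), Framework G M

/-- `M` is a lift of `N` if some single-element extension `M'` of `M` satisfies
`M' \ e = M` and `M' / e = N`. -/
def IsLiftOf (M N : Matroid β) : Prop :=
  ∃ M' : Matroid (Option β), (none : Option β) ∈ M'.E ∧
    deleteM M' {none} = M.map some (Option.some_injective β).injOn ∧
    contractM M' {none} = N.map some (Option.some_injective β).injOn

/-- `M` is a lifted-graphic matroid: for some single-element extension `M'` of `M`,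
`M' / e` is graphic. -/
def LiftedGraphic (M : Matroid β) : Prop :=
  ∃ M' : Matroid (Option β), (none : Option β) ∈ M'.E ∧
    deleteM M' {none} = M.map some (Option.some_injective β).injOn ∧
    Graphic (contractM M' {none})

/-- `(M, V)` is a framed matroid: `V` is a basis of `M` and every element of `M` is
spanned by a subset of `V` with at most two elements. -/
def FramedMatroid {γ : Type u} (M : Matroid γ) (V : Set γ) : Prop :=
  M.IsBase V ∧ ∀ e ∈ M.E, ∃ S ⊆ V, S.ncard ≤ 2 ∧ e ∈ M.closure S

/-- `M` is a frame matroid: `M = M' \ V` for some framed matroid `(M', V)`. -/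
def FrameMatroid (M : Matroid β) : Prop :=
  ∃ (γ : Type v) (M' : Matroid (β ⊕ γ)) (V : Set (β ⊕ γ)),
    FramedMatroid M' V ∧
      deleteM M' V = M.map Sum.inl Sum.inl_injective.injOn

/-- `M` is `3`-connected: it has no `k`-separation for `k ≤ 2`. -/
def ThreeConnected (M : Matroid β) : Prop :=
  ∀ X ⊆ M.E, ∀ k : ℕ, k ≤ 2 → (k : ℕ∞) ≤ X.encard → (k : ℕ∞) ≤ (M.E \ X).encard →
    rank M M.E + k ≤ rank M X + rank M (M.E \ X)

/-- `M` is representable over some field. -/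
def Representable (M : Matroid β) : Prop :=
  ∃ (F : Type v) (_ : Field F) (W : Type v) (_ : AddCommGroup W) (_ : Module F W)
    (φ : β → W), ∀ I ⊆ M.E, (M.Indep I ↔ LinearIndependent F (fun x : I => φ x))

/-- A collection `B` of cycles of `G` satisfies the theta-property if there is no
theta-subgraph of `G` with exactly two of its three cycles in `B`. -/
def ThetaProperty (G : Graph α β) (B : Set (Set β)) : Prop :=
  ∀ H : Graph α β, H.IsSubgraph G → H.IsTheta →
    ∀ C1 C2 C3, H.CycleSet C1 → H.CycleSet C2 → H.CycleSet C3 →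
      C1 ≠ C2 → C2 ≠ C3 → C1 ≠ C3 → C1 ∈ B → C2 ∈ B → C3 ∈ B

/-! Condition (3) says that adding to an independent set `I` an edge that is pendant at a vertex
avoided by `I` keeps it independent. Growing an independent set `X` in this way along a spanning
forest and comparing with `r(M) ≤ |V(G)| − c` shows that `X` meets more than `|X|` vertices. By the
handshake lemma, a nonempty edge set in which every vertex has degree at least two is therefore
dependent; conversely every vertex of a circuit has degree at least two, since a pendant edge could
be removed and put back. A degree count then shows that circuits are connected and 2-regular, that
is, cycles, and a cycle contains a circuit, which by the same degree condition and connectivity is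
the whole cycle. -/

theorem isDiag_iff_eq_diag_of_mem {z : Sym2 α} {v : α} (hv : v ∈ z) :
    z.IsDiag ↔ z = Sym2.diag v := by
  induction z using Sym2.ind with
  | _ a b =>
  rw [Sym2.mem_iff] at hv
  simp only [Sym2.mk_isDiag_iff, Sym2.diag, Sym2.eq_iff]
  grind

theorem card_filter_mem_add_two_mul_card_filter_eq_diag (W : Finset α) (z : Sym2 α)
    (hz : ∀ x ∈ z, x ∈ W) :
    (W.filter fun v => v ∈ z ∧ ¬ z.IsDiag).card + 2 * (W.filter fun v => z = Sym2.diag v).card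
      = 2 := by
  induction z using Sym2.ind with
  | _ a b =>
  have ha : a ∈ W := hz a (Sym2.mem_mk_left a b)
  have hb : b ∈ W := hz b (Sym2.mem_mk_right a b)
  rcases eq_or_ne a b with rfl | hab
  · have : (W.filter fun v => s(a, a) = Sym2.diag v) = {a} := by
      ext v
      simp only [Finset.mem_filter, Finset.mem_singleton, Sym2.diag, Sym2.eq_iff]
      grind
    simp [this]
  · have h1 : (W.filter fun v => v ∈ s(a, b) ∧ ¬ s(a, b).IsDiag) = {a, b} := by
      ext v
      simp only [Finset.mem_filter, Finset.mem_insert, Finset.mem_singleton, Sym2.mem_iff,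
        Sym2.mk_isDiag_iff]
      grind
    have h2 : (W.filter fun v => s(a, b) = Sym2.diag v) = ∅ := by
      ext v
      simp only [Finset.mem_filter, Sym2.diag, Sym2.eq_iff, Finset.notMem_empty, iff_false]
      grind
    rw [h1, h2, Finset.card_pair hab, Finset.card_empty]

namespace Graph

theorem sum_degree_eq_two_mul_ncard_E (G : Graph α β) :
    ∑ v ∈ G.finV.toFinset, G.degree v = 2 * G.E.ncard := by
  have hsep : ∀ P : β → Prop, {e ∈ G.E | P e}.ncard = (G.finE.toFinset.filter P).card := by
    intro P
    rw [← Set.ncard_coe_finset]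
    congr 1
    ext e
    simp
  have hswap := fun r : α → β → Prop =>
    Finset.sum_card_bipartiteAbove_eq_sum_card_bipartiteBelow r (s := G.finV.toFinset)
      (t := G.finE.toFinset)
  simp only [Finset.bipartiteAbove, Finset.bipartiteBelow] at hswap
  simp only [degree, hsep, Finset.sum_add_distrib, ← Finset.mul_sum, hswap]
  rw [Finset.mul_sum, ← Finset.sum_add_distrib]
  calc _ = ∑ _e ∈ G.finE.toFinset, 2 := Finset.sum_congr rfl fun e he => by
        convert card_filter_mem_add_two_mul_card_filter_eq_diag _ _
          fun x hx => G.finV.mem_toFinset.mpr (G.ends_mem (G.finE.mem_toFinset.mp he) hx)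
    _ = 2 * G.E.ncard := by
      rw [Finset.sum_const, smul_eq_mul, mul_comm, Set.ncard_eq_toFinset_card _ G.finE]

variable {G : Graph α β} {X Y : Set β} {v : α} {e : β}

theorem restrictEdges_E_of_subset (hX : X ⊆ G.E) : (G.restrictEdges X).E = X :=
  inter_eq_self_of_subset_left hX

theorem degree_restrictEdges (X : Set β) (v : α) :
    (G.restrictEdges X).degree v =
      {e ∈ X ∩ G.E | v ∈ G.ends e ∧ ¬(G.ends e).IsDiag}.ncard +
        2 * {e ∈ X ∩ G.E | G.ends e = Sym2.diag v}.ncard := rfl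

theorem restrictEdges_V_subset : (G.restrictEdges X).V ⊆ G.V := by
  rintro x ⟨e, ⟨-, he⟩, hx⟩
  exact G.ends_mem he hx

theorem restrictEdges_V_mono (hXY : X ⊆ Y) : (G.restrictEdges X).V ⊆ (G.restrictEdges Y).V := by
  rintro x ⟨e, ⟨heX, he⟩, hx⟩
  exact ⟨e, ⟨hXY heX, he⟩, hx⟩

theorem mem_of_degree_restrictEdges_le (hXY : X ⊆ Y)
    (hdeg : (G.restrictEdges Y).degree v ≤ (G.restrictEdges X).degree v)
    (he : e ∈ Y ∩ G.E) (hv : v ∈ G.ends e) : e ∈ X := by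
  have hsub : ∀ P : β → Prop, {f ∈ X ∩ G.E | P f} ⊆ {f ∈ Y ∩ G.E | P f} :=
    fun P f hf => ⟨⟨hXY hf.1.1, hf.1.2⟩, hf.2⟩
  have hfin : ∀ P : β → Prop, {f ∈ Y ∩ G.E | P f}.Finite :=
    fun P => G.finE.subset fun f hf => hf.1.2
  have hle := fun P => Set.ncard_le_ncard (hsub P) (hfin P)
  have hnonloop := hle fun f => v ∈ G.ends f ∧ ¬(G.ends f).IsDiag
  have hloop := hle fun f => G.ends f = Sym2.diag v
  rw [degree_restrictEdges, degree_restrictEdges] at hdeg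
  by_cases hd : (G.ends e).IsDiag
  · have := Set.eq_of_subset_of_ncard_le (hsub _) (by omega) (hfin fun f => G.ends f = Sym2.diag v)
    have hmem : e ∈ {f ∈ Y ∩ G.E | G.ends f = Sym2.diag v} :=
      ⟨he, (isDiag_iff_eq_diag_of_mem hv).mp hd⟩
    exact (this ▸ hmem).1.1
  · have := Set.eq_of_subset_of_ncard_le (hsub _) (by omega)
      (hfin fun f => v ∈ G.ends f ∧ ¬(G.ends f).IsDiag)
    have hmem : e ∈ {f ∈ Y ∩ G.E | v ∈ G.ends f ∧ ¬(G.ends f).IsDiag} := ⟨he, hv, hd⟩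
    exact (this ▸ hmem).1.1

theorem degree_restrictEdges_eq_of_forall_mem (hXY : X ⊆ Y)
    (h : ∀ e ∈ Y ∩ G.E, v ∈ G.ends e → e ∈ X) :
    (G.restrictEdges X).degree v = (G.restrictEdges Y).degree v := by
  have hsep : ∀ P : β → Prop, (∀ f, P f → v ∈ G.ends f) →
      {f ∈ X ∩ G.E | P f} = {f ∈ Y ∩ G.E | P f} := by
    intro P hP
    ext f
    exact ⟨fun hf => ⟨⟨hXY hf.1.1, hf.1.2⟩, hf.2⟩,
      fun hf => ⟨⟨h f hf.1 (hP f hf.2), hf.1.2⟩, hf.2⟩⟩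
  rw [degree_restrictEdges, degree_restrictEdges, hsep _ fun f hf => hf.1,
    hsep (fun f => G.ends f = Sym2.diag v) fun f hf => hf ▸ Sym2.mem_mk_left v v]

theorem nonloop_unique_of_degree_restrictEdges_lt_two
    (hdeg : (G.restrictEdges X).degree v < 2) (he : e ∈ X ∩ G.E) (hv : v ∈ G.ends e) :
    G.ends e ≠ Sym2.diag v ∧ ∀ f ∈ X ∩ G.E, v ∈ G.ends f → f = e := by
  have hfin : ∀ P : β → Prop, {f ∈ X ∩ G.E | P f}.Finite :=
    fun P => G.finE.subset fun f hf => hf.1.2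
  rw [degree_restrictEdges] at hdeg
  have hnoloop : ∀ f ∈ X ∩ G.E, v ∈ G.ends f → ¬ (G.ends f).IsDiag := by
    intro f hf hvf hd
    have := (Set.ncard_pos (hfin fun f => G.ends f = Sym2.diag v)).mpr
      ⟨f, hf, (isDiag_iff_eq_diag_of_mem hvf).mp hd⟩
    omega
  refine ⟨fun h => hnoloop e he hv (h ▸ Sym2.diag_isDiag v), fun f hf hvf => ?_⟩
  by_contra hfe
  have := (Set.one_lt_ncard (hfin fun f => v ∈ G.ends f ∧ ¬(G.ends f).IsDiag)).mpr
    ⟨f, ⟨hf, hvf, hnoloop f hf hvf⟩, e, ⟨he, hv, hnoloop e he hv⟩, hfe⟩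
  omega

variable {u w : α} {S : Set α}

theorem Adj.symm (h : G.Adj u w) : G.Adj w u := by
  obtain ⟨e, he, huw⟩ := h
  exact ⟨e, he, huw.trans Sym2.eq_swap⟩

theorem reflTransGen_adj_symm (h : Relation.ReflTransGen G.Adj u w) :
    Relation.ReflTransGen G.Adj w u := by
  induction h with
  | refl => rfl
  | tail _ hbc ih => exact Relation.ReflTransGen.head hbc.symm ih

theorem reflTransGen_adj_of_mem_ends (he : e ∈ G.E) (hu : u ∈ G.ends e) (hw : w ∈ G.ends e) :
    Relation.ReflTransGen G.Adj u w := by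
  rcases eq_or_ne u w with rfl | huw
  · rfl
  refine Relation.ReflTransGen.single ⟨e, he, ?_⟩
  induction h : G.ends e using Sym2.ind with
  | _ a b =>
  rw [h, Sym2.mem_iff] at hu hw
  rcases hu with rfl | rfl <;> rcases hw with rfl | rfl
  exacts [absurd rfl huw, rfl, Sym2.eq_swap, absurd rfl huw]

theorem mem_of_reflTransGen_adj (hS : ∀ a b, a ∈ S → G.Adj a b → b ∈ S) (hu : u ∈ S)
    (h : Relation.ReflTransGen G.Adj u w) : w ∈ S := by
  induction h with
  | refl => exact hu
  | tail _ hbc ih => exact hS _ _ ih hbc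

theorem mem_componentOf_self (hv : v ∈ G.V) : v ∈ (G.componentOf v).V :=
  ⟨hv, Relation.ReflTransGen.refl⟩

theorem setOf_isComponentOf_eq_image : {H | H.IsComponentOf G} = G.componentOf '' G.V := by
  ext H
  constructor <;> rintro ⟨v, hv, rfl⟩ <;> exact ⟨v, hv, rfl⟩

theorem ncomponents_le_ncard_V : G.ncomponents ≤ G.V.ncard := by
  rw [ncomponents, setOf_isComponentOf_eq_image]
  exact Set.ncard_image_le G.finV

def componentsDisjointFrom (G : Graph α β) (S : Set α) : Set (Graph α β) :=
  {H | H.IsComponentOf G ∧ Disjoint H.V S}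

theorem componentsDisjointFrom_finite (S : Set α) : (G.componentsDisjointFrom S).Finite :=
  (setOf_isComponentOf_eq_image ▸ G.finV.image _).subset fun _ hH => hH.1

theorem componentsDisjointFrom_anti {T : Set α} (hST : S ⊆ T) :
    G.componentsDisjointFrom T ⊆ G.componentsDisjointFrom S :=
  fun _ hH => ⟨hH.1, hH.2.mono_right hST⟩

theorem ncard_componentsDisjointFrom_lt (hv : v ∈ S ∩ G.V) :
    (G.componentsDisjointFrom S).ncard < G.ncomponents := by
  refine Set.ncard_lt_ncard ⟨fun _ hH => hH.1, fun hsub => ?_⟩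
    (setOf_isComponentOf_eq_image ▸ G.finV.image _)
  exact Set.disjoint_left.mp (hsub ⟨v, hv.2, rfl⟩).2 (mem_componentOf_self hv.2) hv.1

theorem ncard_V_diff_insert_add_one (hv : v ∈ G.V \ S) :
    (G.V \ insert v S).ncard + 1 = (G.V \ S).ncard := by
  have : G.V \ insert v S = (G.V \ S) \ {v} := by
    ext x
    simp only [mem_sdiff, mem_insert_iff, mem_singleton_iff]
    tauto
  rw [this, Set.ncard_sdiff_singleton_add_one hv (G.finV.subset sdiff_subset)]

theorem exists_ssubset_degree_eq_of_not_connected (h : ¬ (G.restrictEdges X).Connected) :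
    ∃ Y ⊂ X, Y.Nonempty ∧ ∀ v ∈ (G.restrictEdges Y).V,
      (G.restrictEdges Y).degree v = (G.restrictEdges X).degree v := by
  simp only [Connected, not_forall] at h
  obtain ⟨u, ⟨e, he, hue⟩, w, ⟨f, hf, hwf⟩, huw⟩ := h
  set H := G.restrictEdges X
  have hreach : ∀ {a b g}, g ∈ X ∩ G.E → a ∈ G.ends g → b ∈ G.ends g →
      Relation.ReflTransGen H.Adj a b :=
    fun hg ha hb => reflTransGen_adj_of_mem_ends (G := H) hg ha hb
  set Y := (H.componentOf u).E
  have hYX : Y ⊆ X := fun g hg => hg.1.1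
  refine ⟨Y, ⟨hYX, fun hXY => huw ((hXY hf.1).2 w hwf)⟩,
    ⟨e, he, fun x hx => hreach he hue hx⟩, fun v ⟨g, hg, hvg⟩ => ?_⟩
  refine degree_restrictEdges_eq_of_forall_mem hYX fun g' hg' hvg' => ⟨hg', fun x hx => ?_⟩
  exact (hg.1.2 v hvg).trans (hreach hg' hvg' hx)

theorem inter_E_subset_of_incidence_closed (hXY : X ⊆ Y) (hY : (G.restrictEdges Y).Connected)
    (hX : (X ∩ G.E).Nonempty)
    (h : ∀ v ∈ (G.restrictEdges X).V, ∀ e ∈ Y ∩ G.E, v ∈ G.ends e → e ∈ X) :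
    Y ∩ G.E ⊆ X := by
  obtain ⟨e₀, he₀⟩ := hX
  intro e he
  have hclosed : ∀ a b, a ∈ (G.restrictEdges X).V → (G.restrictEdges Y).Adj a b →
      b ∈ (G.restrictEdges X).V := by
    rintro a b ha ⟨f, hf, hab⟩
    exact ⟨f, ⟨h a ha f hf (hab ▸ Sym2.mem_mk_left a b), hf.2⟩, hab ▸ Sym2.mem_mk_right a b⟩
  have hx := mem_of_reflTransGen_adj hclosed ⟨e₀, he₀, (G.ends e₀).out_fst_mem⟩
    (hY _ ⟨e₀, ⟨hXY he₀.1, he₀.2⟩, (G.ends e₀).out_fst_mem⟩ _ ⟨e, he, (G.ends e).out_fst_mem⟩)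
  exact h _ hx e he (G.ends e).out_fst_mem

end Graph

variable {G : Graph α β} {M : Matroid β} {C X : Set β} {S : Set α}

theorem isCircuit_iff_matroidIsCircuit : IsCircuit M C ↔ M.IsCircuit C :=
  ⟨fun ⟨hdep, hmin⟩ => Matroid.isCircuit_iff.mpr ⟨hdep, fun D hD hDC =>
      by_contra fun hne => hD.not_indep (hmin D (hDC.ssubset_of_ne hne))⟩,
    fun hC => ⟨hC.dep, fun _ hD => hC.ssubset_indep hD⟩⟩

theorem ncard_le_rank (hfin : M.E.Finite) {I : Set β} (hI : M.Indep I) :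
    I.ncard ≤ rank M M.E := by
  have hle : I.encard ≤ ⨆ J ∈ {J : Set β | M.Indep J ∧ J ⊆ M.E}, J.encard :=
    le_iSup₂ (f := fun J (_ : J ∈ {J : Set β | M.Indep J ∧ J ⊆ M.E}) => J.encard)
      I ⟨hI, hI.subset_ground⟩
  have hfin' : (⨆ J ∈ {J : Set β | M.Indep J ∧ J ⊆ M.E}, J.encard) ≠ ⊤ :=
    ne_top_of_le_ne_top hfin.encard_lt_top.ne (iSup₂_le fun J hJ => Set.encard_mono hJ.2)
  exact ENat.toNat_le_toNat hle hfin'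

def AddPendantIndep (G : Graph α β) (M : Matroid β) : Prop :=
  ∀ ⦃I : Set β⦄ ⦃v : α⦄ ⦃e : β⦄, M.Indep I → (∀ f ∈ I, v ∉ G.ends f) →
    e ∈ G.E → v ∈ G.ends e → G.ends e ≠ Sym2.diag v → M.Indep (insert e I)

theorem WeakFramework.addPendantIndep (h : WeakFramework G M) : AddPendantIndep G M := by
  intro I v e hI hIv he hve hnl
  have hIdel : I ⊆ (G.deleteVertex v).E := fun f hf =>
    ⟨h.1 ▸ hI.subset_ground hf, fun x hx hxv => hIv f hf (mem_singleton_iff.mp hxv ▸ hx)⟩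
  have hecl : e ∉ M.closure I := fun hecl => by
    rcases h.2.2 v (G.ends_mem he hve) (M.closure_subset_closure hIdel hecl) with hdel | hloop
    · exact hdel.2 v hve rfl
    · exact hnl hloop.2
  exact (hI.insert_indep_iff).mpr (Or.inl ⟨h.1 ▸ he, hecl⟩)

namespace AddPendantIndep

theorem exists_indep_add_ncard_le (hP : AddPendantIndep G M) (hX : M.Indep X) (hXE : X ⊆ G.E)
    (hXS : ∀ e ∈ X, ∀ x ∈ G.ends e, x ∈ S) :
    ∃ X', M.Indep X' ∧
      X.ncard + (G.V \ S).ncard ≤ X'.ncard + (G.componentsDisjointFrom S).ncard := by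
  induction hn : (G.V \ S).ncard generalizing S X with
  | zero => exact ⟨X, hX, by omega⟩
  | succ n ih =>
    by_cases hclosed : ∀ a b, a ∈ S → G.Adj a b → b ∈ S
    · obtain ⟨v, hv⟩ : (G.V \ S).Nonempty := Set.nonempty_of_ncard_ne_zero (by omega)
      have hcomp : G.componentOf v ∈ G.componentsDisjointFrom S \
          G.componentsDisjointFrom (insert v S) := by
        refine ⟨⟨⟨v, hv.1, rfl⟩, Set.disjoint_left.mpr fun x hx hxS => hv.2 ?_⟩,
          fun h => Set.disjoint_left.mp h.2 (G.mem_componentOf_self hv.1) (mem_insert v S)⟩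
        exact G.mem_of_reflTransGen_adj hclosed hxS (G.reflTransGen_adj_symm hx.2)
      have hlt := Set.ncard_lt_ncard
        ⟨G.componentsDisjointFrom_anti (subset_insert v S), fun h => hcomp.2 (h hcomp.1)⟩
        (G.componentsDisjointFrom_finite S)
      obtain ⟨X', hX', hcard⟩ := ih (S := insert v S) hX hXE
        (fun f hf x hx => Or.inr (hXS f hf x hx))
        (by have := G.ncard_V_diff_insert_add_one hv; omega)
      exact ⟨X', hX', by omega⟩
    · push Not at hclosed
      obtain ⟨a, b, ha, ⟨e, he, hab⟩, hb⟩ := hclosed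
      have hbV : b ∈ G.V \ S := ⟨G.ends_mem he (hab ▸ Sym2.mem_mk_right a b), hb⟩
      have hbX : ∀ f ∈ X, b ∉ G.ends f := fun f hf hbf => hb (hXS f hf b hbf)
      have hins : M.Indep (insert e X) := hP hX hbX he (hab ▸ Sym2.mem_mk_right a b)
        fun hdiag => hb (Sym2.mk_isDiag_iff.mp (hab ▸ hdiag ▸ Sym2.diag_isDiag b) ▸ ha)
      have heX : e ∉ X := fun heX => hbX e heX (hab ▸ Sym2.mem_mk_right a b)
      obtain ⟨X', hX', hcard⟩ := ih (S := insert b S) hins (insert_subset he hXE)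
        (fun f hf x hx => by
          rcases hf with rfl | hf
          · rw [hab, Sym2.mem_iff] at hx
            rcases hx with rfl | rfl
            exacts [Or.inr ha, Or.inl rfl]
          · exact Or.inr (hXS f hf x hx))
        (by have := G.ncard_V_diff_insert_add_one hbV; omega)
      have hmono := Set.ncard_le_ncard (G.componentsDisjointFrom_anti (subset_insert b S))
        (G.componentsDisjointFrom_finite S)
      rw [Set.ncard_insert_of_notMem heX (G.finE.subset hXE)] at hcard
      exact ⟨X', hX', by omega⟩

theorem ncard_lt_ncard_of_indep (hP : AddPendantIndep G M)
    (hrk : ∀ I, M.Indep I → I.ncard + G.ncomponents ≤ G.V.ncard)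
    (hSV : S ⊆ G.V) (hS : S.Nonempty) (hX : M.Indep X) (hXE : X ⊆ G.E)
    (hXS : ∀ e ∈ X, ∀ x ∈ G.ends e, x ∈ S) : X.ncard < S.ncard := by
  obtain ⟨X', hX', hcard⟩ := hP.exists_indep_add_ncard_le hX hXE hXS
  obtain ⟨v, hv⟩ := hS
  have hcomp := G.ncard_componentsDisjointFrom_lt ⟨hv, hSV hv⟩
  have hV := Set.ncard_sdiff_add_ncard_of_subset hSV G.finV
  have := hrk X' hX'
  omega

theorem not_indep_of_two_le_degree (hP : AddPendantIndep G M)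
    (hrk : ∀ I, M.Indep I → I.ncard + G.ncomponents ≤ G.V.ncard)
    (hXE : X ⊆ G.E) (hX : X.Nonempty)
    (hdeg : ∀ v ∈ (G.restrictEdges X).V, 2 ≤ (G.restrictEdges X).degree v) : ¬ M.Indep X := by
  intro hXi
  set H := G.restrictEdges X
  obtain ⟨e, he⟩ := hX
  have hlt : X.ncard < H.V.ncard :=
    hP.ncard_lt_ncard_of_indep hrk Graph.restrictEdges_V_subset
      ⟨_, e, ⟨he, hXE he⟩, (G.ends e).out_fst_mem⟩ hXi hXE fun f hf x hx => ⟨f, ⟨hf, hXE hf⟩, hx⟩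
  have hsum : H.finV.toFinset.card * 2 ≤ ∑ v ∈ H.finV.toFinset, H.degree v :=
    Finset.card_nsmul_le_sum _ _ _ fun v hv => hdeg v (H.finV.mem_toFinset.mp hv)
  rw [H.sum_degree_eq_two_mul_ncard_E, Graph.restrictEdges_E_of_subset hXE,
    ← Set.ncard_eq_toFinset_card _ H.finV] at hsum
  omega

theorem two_le_degree_of_isCircuit (hP : AddPendantIndep G M) (hC : M.IsCircuit C)
    (hCE : C ⊆ G.E) : ∀ v ∈ (G.restrictEdges C).V, 2 ≤ (G.restrictEdges C).degree v := by
  rintro v ⟨e, he, hve⟩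
  by_contra! hdeg
  obtain ⟨hnl, huniq⟩ := Graph.nonloop_unique_of_degree_restrictEdges_lt_two hdeg he hve
  have hind := hP (hC.ssubset_indep (sdiff_singleton_ssubset.mpr he.1))
    (fun f hf hvf => hf.2 (huniq f ⟨hf.1, hCE hf.1⟩ hvf)) he.2 hve hnl
  rw [insert_sdiff_singleton, insert_eq_of_mem he.1] at hind
  exact hC.dep.not_indep hind

theorem cycleSet_of_isCircuit (hP : AddPendantIndep G M)
    (hrk : ∀ I, M.Indep I → I.ncard + G.ncomponents ≤ G.V.ncard)
    (hC : M.IsCircuit C) (hCE : C ⊆ G.E) : G.CycleSet C := by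
  set H := G.restrictEdges C
  have hdeg := hP.two_le_degree_of_isCircuit hC hCE
  have hconn : H.Connected := by
    by_contra hdisc
    obtain ⟨Y, hYC, hY, hdegY⟩ := Graph.exists_ssubset_degree_eq_of_not_connected hdisc
    refine hP.not_indep_of_two_le_degree hrk (hYC.subset.trans hCE) hY (fun v hv => ?_)
      (hC.ssubset_indep hYC)
    exact hdegY v hv ▸ hdeg v (Graph.restrictEdges_V_mono hYC.subset hv)
  obtain ⟨e, he⟩ := hC.nonempty
  have hlt : (C \ {e}).ncard < H.V.ncard :=
    hP.ncard_lt_ncard_of_indep hrk Graph.restrictEdges_V_subset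
      ⟨_, e, ⟨he, hCE he⟩, (G.ends e).out_fst_mem⟩
      (hC.ssubset_indep (sdiff_singleton_ssubset.mpr he)) (sdiff_subset.trans hCE)
      fun f hf x hx => ⟨f, ⟨hf.1, hCE hf.1⟩, hx⟩
  have hCcard := Set.ncard_sdiff_singleton_add_one he (G.finE.subset hCE)
  have hsum : ∑ v ∈ H.finV.toFinset, H.degree v ≤ ∑ _v ∈ H.finV.toFinset, 2 := by
    rw [H.sum_degree_eq_two_mul_ncard_E, Graph.restrictEdges_E_of_subset hCE, Finset.sum_const,
      smul_eq_mul, ← Set.ncard_eq_toFinset_card _ H.finV]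
    omega
  have hsum_eq := (Finset.sum_eq_sum_iff_of_le fun v hv => hdeg v (H.finV.mem_toFinset.mp hv)).mp
    (le_antisymm (Finset.sum_le_sum fun v hv => hdeg v (H.finV.mem_toFinset.mp hv)) hsum)
  exact ⟨hCE, ⟨e, he, hCE he⟩, hconn, fun v hv => (hsum_eq v (H.finV.mem_toFinset.mpr hv)).symm⟩

theorem isCircuit_of_cycleSet (hP : AddPendantIndep G M)
    (hrk : ∀ I, M.Indep I → I.ncard + G.ncomponents ≤ G.V.ncard)
    (hCM : C ⊆ M.E) (hC : G.CycleSet C) : M.IsCircuit C := by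
  obtain ⟨hCE, hne, hconn, hdeg⟩ := hC
  rw [Graph.restrictEdges_E_of_subset hCE] at hne
  have hdep : M.Dep C :=
    ⟨hP.not_indep_of_two_le_degree hrk hCE hne fun v hv => (hdeg v hv).ge, hCM⟩
  obtain ⟨D, hDC, hD⟩ := hdep.exists_isCircuit_subset
  have hDE := hDC.trans hCE
  have hclosed : ∀ v ∈ (G.restrictEdges D).V, ∀ e ∈ C ∩ G.E, v ∈ G.ends e → e ∈ D :=
    fun v hv e he hve => Graph.mem_of_degree_restrictEdges_le hDC
      ((hdeg v (Graph.restrictEdges_V_mono hDC hv)).trans_le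
        (hP.two_le_degree_of_isCircuit hD hDE v hv)) he hve
  obtain ⟨d, hd⟩ := hD.nonempty
  have hCD := Graph.inter_E_subset_of_incidence_closed hDC hconn ⟨d, hd, hDE hd⟩ hclosed
  rwa [hDC.antisymm fun e he => hCD ⟨he, hCE he⟩] at hD

end AddPendantIndep

/-- Let `G` be a finite graph with `c` connected components and let `M`
be a matroid. If `G` is a weak framework for `M` and `r(M) ≤ |V(G)| − c`, then `M` is the
cycle matroid `M(G)` of `G`. -/
theorem statement10 {α : Type u} {β : Type v} (G : Graph α β) (M : Matroid β)
    (h : WeakFramework G M) (hr : rank M M.E ≤ G.V.ncard - G.ncomponents) :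
    IsCycleMatroidOf G M := by
  have hP := h.addPendantIndep
  have hrk : ∀ I, M.Indep I → I.ncard + G.ncomponents ≤ G.V.ncard := fun I hI => by
    have := ncard_le_rank (h.1 ▸ G.finE) hI
    have := G.ncomponents_le_ncard_V
    omega
  refine ⟨h.1.symm, fun C => ?_⟩
  rw [isCircuit_iff_matroidIsCircuit]
  exact ⟨fun hC => hP.cycleSet_of_isCircuit hrk hC (h.1 ▸ hC.subset_ground),
    fun hC => hP.isCircuit_of_cycleSet hrk (h.1 ▸ hC.1) hC⟩

end QuasiGraphicPaper
end

section
/- Let G be a weak framework for a matroid M. If H is a connected component of G, then λ_M(E(H)) ≤ 1, where λ_M(X) = r_M(X) + r_M(E(M)−X) − r(M). -/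
/-!
Let `H` be the component of `v`, `X = E(H)` and `Y = E(M) - X`; condition (2) gives
`r(X) ≤ |V(H)|`, so it suffices to show `r(Y) + |V(H)| - 1 ≤ r(M)`. Grow a spanning tree of `H`
from `v`: each new edge `g` joins the vertex set `S` reached so far to a new vertex `w`. Neither
the edges of `Y` nor the edges inside `S` meet `w`, and `g` is not a loop at `w`, so by
condition (3) at `w` the edge `g` is not spanned by them and raises the rank by one.
-/

open Set Matroid
open scoped Classical

namespace QuasiGraphicPaper

universe u v

/-! ### Matroid notions -/

variable {α : Type u} {β : Type v}

theorem _root_.Relation.ReflTransGen.exists_rel_of_mem_of_notMem {γ : Type*}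
    {r : γ → γ → Prop} {a b : γ} {S : Set γ} (hab : Relation.ReflTransGen r a b) (ha : a ∈ S)
    (hb : b ∉ S) : ∃ x ∈ S, ∃ y ∉ S, r x y ∧ Relation.ReflTransGen r a y := by
  induction hab with
  | refl => exact absurd ha hb
  | @tail c d hac hcd ih =>
    by_cases hc : c ∈ S
    · exact ⟨c, hc, d, hb, hcd, hac.tail hcd⟩
    · exact ih hc

lemma rank_eq_toNat_eRk (M : Matroid β) (X : Set β) : rank M X = (M.eRk X).toNat := by
  refine congrArg ENat.toNat <|
    le_antisymm (iSup₂_le fun I hI ↦ hI.1.encard_le_eRk_of_subset hI.2) ?_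
  obtain ⟨I, hI⟩ := M.exists_isBasis' X
  rw [← hI.encard_eq_eRk]
  exact le_biSup (fun I : Set β ↦ I.encard) (⟨hI.indep, hI.subset⟩ : M.Indep I ∧ I ⊆ X)

namespace Graph

variable {G : Graph α β} {v w : α} {e : β}

/-- `E(G[S])`. -/
def inducedEdges (G : Graph α β) (S : Set α) : Set β := {e ∈ G.E | ∀ x ∈ G.ends e, x ∈ S}

lemma inducedEdges_subset (G : Graph α β) (S : Set α) : G.inducedEdges S ⊆ G.E :=
  sep_subset _ _

lemma inducedEdges_mono (G : Graph α β) {S T : Set α} (hST : S ⊆ T) :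
    G.inducedEdges S ⊆ G.inducedEdges T :=
  fun _ he ↦ ⟨he.1, fun x hx ↦ hST (he.2 x hx)⟩

lemma mem_componentOf_E (he : e ∈ G.E) (hwe : w ∈ G.ends e)
    (hvw : Relation.ReflTransGen G.Adj v w) : e ∈ (G.componentOf v).E := by
  refine ⟨he, fun x hx ↦ ?_⟩
  have hadj : G.Adj w (Sym2.Mem.other hwe) := ⟨e, he, (Sym2.other_spec hwe).symm⟩
  rw [← Sym2.other_spec hwe, Sym2.mem_iff] at hx
  rcases hx with rfl | rfl
  · exact hvw
  · exact hvw.tail hadj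

end Graph

variable {G : Graph α β} {M : Matroid β}

lemma WeakFramework.notMem_closure (h : WeakFramework G M) {Z : Set β} {g : β} {u w : α}
    (hZ : ∀ f ∈ Z, f ∈ G.E ∧ w ∉ G.ends f) (hg : g ∈ G.E) (hgends : G.ends g = s(u, w))
    (huw : u ≠ w) : g ∉ M.closure Z := by
  intro hgZ
  have hwg : w ∈ G.ends g := hgends ▸ Sym2.mem_mk_right u w
  have hZw : Z ⊆ (G.deleteVertex w).E := fun f hf ↦
    ⟨(hZ f hf).1, fun x hx hxw ↦ (hZ f hf).2 (mem_singleton_iff.1 hxw ▸ hx)⟩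
  rcases h.2.2 w (G.ends_mem hg hwg) (M.closure_subset_closure hZw hgZ) with hgw | hloop
  · exact hgw.2 w hwg rfl
  · have hdiag : s(u, w) = s(w, w) := hgends ▸ hloop.2
    exact huw ((Sym2.eq_iff.1 hdiag).elim (·.1) (·.1))

section Component

variable {v : α} {Y : Set β}

abbrev AvoidsComponent (G : Graph α β) (v : α) (Y : Set β) : Prop :=
  ∀ f ∈ Y, f ∈ G.E ∧ ∀ x ∈ G.ends f, ¬ Relation.ReflTransGen G.Adj v x

lemma WeakFramework.exists_insert_eRk_le (h : WeakFramework G M) (hY : AvoidsComponent G v Y)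
    {S : Set α} (hvS : v ∈ S) (hSR : S ⊂ (G.componentOf v).V)
    (hS : M.eRk Y + S.encard ≤ M.eRk (Y ∪ G.inducedEdges S) + 1) :
    ∃ w ∈ (G.componentOf v).V \ S,
      M.eRk Y + (insert w S).encard ≤ M.eRk (Y ∪ G.inducedEdges (insert w S)) + 1 := by
  obtain ⟨u, ⟨-, hvu⟩, huS⟩ := exists_of_ssubset hSR
  obtain ⟨s, hsS, w, hwS, ⟨g, hg, hgends⟩, hvw⟩ := hvu.exists_rel_of_mem_of_notMem hvS huS
  have hwV : w ∈ G.V := G.ends_mem hg (hgends ▸ Sym2.mem_mk_right s w)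
  have hgS : g ∈ G.inducedEdges (insert w S) := ⟨hg, fun x hx ↦ by
    rw [hgends, Sym2.mem_iff] at hx
    rcases hx with rfl | rfl
    exacts [mem_insert_of_mem _ hsS, mem_insert _ _]⟩
  have hgcl : g ∉ M.closure (Y ∪ G.inducedEdges S) := by
    refine h.notMem_closure (fun f hf ↦ ?_) hg hgends (fun hsw ↦ hwS (hsw ▸ hsS))
    rcases hf with hf | hf
    · exact ⟨(hY f hf).1, fun hwf ↦ (hY f hf).2 w hwf hvw⟩
    · exact ⟨hf.1, fun hwf ↦ hwS (hf.2 w hwf)⟩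
  have hgE : g ∈ M.E := h.1 ▸ hg
  refine ⟨w, ⟨⟨hwV, hvw⟩, hwS⟩, ?_⟩
  calc M.eRk Y + (insert w S).encard = M.eRk Y + S.encard + 1 := by
        rw [encard_insert_of_notMem hwS, add_assoc]
    _ ≤ M.eRk (Y ∪ G.inducedEdges S) + 1 + 1 := add_le_add_left hS 1
    _ = M.eRk (insert g (Y ∪ G.inducedEdges S)) + 1 := by
        rw [eRk_insert_eq_add_one ⟨hgE, hgcl⟩]
    _ ≤ M.eRk (Y ∪ G.inducedEdges (insert w S)) + 1 := by
        refine add_le_add_left (M.eRk_mono (insert_subset (Or.inr hgS) ?_)) 1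
        exact union_subset_union_right Y (G.inducedEdges_mono (subset_insert w S))

lemma WeakFramework.eRk_add_encard_le (h : WeakFramework G M) (hv : v ∈ G.V)
    (hY : AvoidsComponent G v Y) :
    M.eRk Y + (G.componentOf v).V.encard ≤
      M.eRk (Y ∪ G.inducedEdges (G.componentOf v).V) + 1 := by
  refine ((G.componentOf v).finV.induction_to
    (C := fun S ↦ v ∈ S ∧ M.eRk Y + S.encard ≤ M.eRk (Y ∪ G.inducedEdges S) + 1) {v}
    (singleton_subset_iff.2 ⟨hv, .refl⟩) ⟨rfl, ?_⟩ fun S hSR ⟨hvS, hS⟩ ↦ ?_).2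
  · rw [encard_singleton]
    exact add_le_add_left (M.eRk_mono subset_union_left) 1
  · obtain ⟨w, hw, hwS⟩ := h.exists_insert_eRk_le hY hvS hSR hS
    exact ⟨w, hw, mem_insert_of_mem w hvS, hwS⟩

end Component

/-- Let `G` be a weak framework for a matroid `M`. If `H` is a connected
component of `G`, then `λ_M(E(H)) ≤ 1`, where
`λ_M(X) = r_M(X) + r_M(E(M)−X) − r(M)`. -/
theorem statement14 {α : Type u} {β : Type v} (G H : Graph α β) (M : Matroid β)
    (h : WeakFramework G M) (hH : H.IsComponentOf G) :
    rank M H.E + rank M (M.E \ H.E) ≤ rank M M.E + 1 := by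
  obtain ⟨v, hv, rfl⟩ := hH
  set R := (G.componentOf v).V
  set X := (G.componentOf v).E
  set Y := M.E \ X
  have hX : rank M X ≤ R.ncard := h.2.1 _ ⟨v, hv, rfl⟩
  have hY : AvoidsComponent G v Y := fun f hf ↦
    ⟨h.1 ▸ hf.1, fun x hx hvx ↦ hf.2 (Graph.mem_componentOf_E (h.1 ▸ hf.1) hx hvx)⟩
  have hYR : M.eRk Y + R.ncard ≤ M.eRk M.E + 1 := by
    rw [(G.componentOf v).finV.cast_ncard_eq]
    refine (h.eRk_add_encard_le hv hY).trans (add_le_add_left (M.eRk_mono ?_) 1)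
    exact union_subset sdiff_subset (h.1 ▸ G.inducedEdges_subset R)
  have hE : M.eRk M.E ≠ ⊤ := (M.isRkFinite_of_finite (h.1 ▸ G.finE)).eRk_lt_top.ne
  have hYfin : M.eRk Y ≠ ⊤ := ne_top_of_le_ne_top hE (M.eRk_mono sdiff_subset)
  simp only [rank_eq_toNat_eRk] at hX ⊢
  lift M.eRk Y to ℕ using hYfin with y
  lift M.eRk M.E to ℕ using hE with r
  norm_cast at hYR
  simp only [ENat.toNat_natCast]
  omega

end QuasiGraphicPaper
end
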